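/- For every nonempty finite ω ⊆ α and every x ∈ ω, one has k̄({x}, ω \ {x}) = k(ω); that is, the function k̄(ω, ζ) := (exp*(−k) * D_ω(e^{−βE}))(ζ) satisfies k̄({x}, ω \ {x}) = k(ω). -/

import Mathlib

open Finset

noncomputable section

variable {α : Type*} [DecidableEq α]

/-- The convolution `(ψ₁ * ψ₂)(ω) := Σ_{ω₁ ⊆ ω} ψ₁(ω₁)·ψ₂(ω \ ω₁)`. -/
def starMul (ψ₁ ψ₂ : Finset α → ℝ) : Finset α → ℝ :=
  fun ω => ∑ ω₁ ∈ ω.powerset, ψ₁ ω₁ * ψ₂ (ω \ ω₁)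

/-- The unit `1*` of the convolution algebra. -/
def starUnit : Finset α → ℝ := fun ω => if ω = ∅ then 1 else 0

/-- Convolution powers `ψ^{*n}`. -/
def starPow (ψ : Finset α → ℝ) : ℕ → Finset α → ℝ
  | 0 => starUnit
  | n + 1 => starMul ψ (starPow ψ n)

/-- `exp* ψ := Σ_{n≥0} ψ^{*n}/n!`; for `ψ(∅) = 0` this is a pointwise finite sum since
`ψ^{*n}(ω) = 0` whenever `n > |ω|`. -/
def expStar (ψ : Finset α → ℝ) : Finset α → ℝ :=
  fun ω => ∑ n ∈ Finset.range (ω.card + 1), (n.factorial : ℝ)⁻¹ * starPow ψ n ω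

/-- `ln*(1* + ψ) := Σ_{n≥1} ((−1)^{n−1}/n)·ψ^{*n}`, applied to `F = 1* + ψ`. -/
def lnStar (F : Finset α → ℝ) : Finset α → ℝ :=
  fun ω => ∑ n ∈ Finset.Icc 1 ω.card,
    ((-1 : ℝ) ^ (n - 1) / n) * starPow (fun ζ => F ζ - starUnit ζ) n ω

/-- `(D_{ω'}ψ)(ω) := ψ(ω ∪ ω')` if `ω ∩ ω' = ∅` and `0` otherwise. -/
def Dop (ω' : Finset α) (ψ : Finset α → ℝ) : Finset α → ℝ :=
  fun ω => if Disjoint ω ω' then ψ (ω ∪ ω') else 0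

/-- The energy `E(ω) := Σ_{{x,y} ⊆ ω, x ≠ y} φ(x,y)`, each unordered pair counted once. -/
def energy (φ : α → α → ℝ) (hφ : ∀ x y, φ x y = φ y x) (ω : Finset α) : ℝ :=
  ∑ e ∈ ω.sym2.filter (fun e => ¬ e.IsDiag), Sym2.lift ⟨φ, hφ⟩ e

/-- The Gibbs factor `ω ↦ e^{-βE(ω)}`. -/
def gibbs (β : ℝ) (φ : α → α → ℝ) (hφ : ∀ x y, φ x y = φ y x) : Finset α → ℝ :=
  fun ω => Real.exp (-β * energy φ hφ ω)

/-- Graphs on `ω`: sets of unordered pairs of distinct elements of `ω`. -/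
def graphsOn (ω : Finset α) : Finset (Finset (Sym2 α)) :=
  ω.sym2.powerset.filter fun G => ∀ e ∈ G, ¬ e.IsDiag

/-- The simple graph with vertex set `ω` and edge set `G`. -/
def toGraph (ω : Finset α) (G : Finset (Sym2 α)) : SimpleGraph {x // x ∈ ω} :=
  SimpleGraph.fromEdgeSet {e | e.map Subtype.val ∈ G}

open Classical in
/-- The Ursell function `k(ω) = Σ_{G connected graph on ω} ∏_{{x,y} ∈ G} (e^{−βφ(x,y)} − 1)`
(`= 0` for `ω = ∅`, since there is no connected graph on an empty vertex set). -/
def ursell (β : ℝ) (φ : α → α → ℝ) (hφ : ∀ x y, φ x y = φ y x) (ω : Finset α) : ℝ :=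
  ∑ G ∈ (graphsOn ω).filter (fun G => (toGraph ω G).Connected),
    ∏ e ∈ G, (Real.exp (-β * Sym2.lift ⟨φ, hφ⟩ e) - 1)

/-- `k̄(ω, ζ) := (exp*(−k) * D_ω(e^{−βE}))(ζ)`. -/
def kbar (β : ℝ) (φ : α → α → ℝ) (hφ : ∀ x y, φ x y = φ y x) (ω ζ : Finset α) : ℝ :=
  starMul (expStar fun η => - ursell β φ hφ η) (Dop ω (gibbs β φ hφ)) ζ

open Classical in
/-- Trees on `ω`: connected graphs on `ω` without cycles. -/
def treesOn (ω : Finset α) : Finset (Finset (Sym2 α)) :=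
  (graphsOn ω).filter fun T => (toGraph ω T).IsTree

open Classical in
/-- `Q({x}, ζ) := e^{2βB(|ζ|+1)} Σ_{T tree on {x}∪ζ} ∏_{{y,y'} ∈ T} |e^{−βφ(y,y')} − 1|`,
and `Q({x}, ∅) := e^{2βB}`. -/
def Qone (β B : ℝ) (φ : α → α → ℝ) (hφ : ∀ x y, φ x y = φ y x) (x : α) (ζ : Finset α) : ℝ :=
  if ζ = ∅ then Real.exp (2 * β * B)
  else Real.exp (2 * β * B * (ζ.card + 1)) *
    ∑ T ∈ treesOn (insert x ζ), ∏ e ∈ T, |Real.exp (-β * Sym2.lift ⟨φ, hφ⟩ e) - 1|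

open Classical in
/-- `Q(ω, ζ) := Σ Q({x₁}, ζ₁)⋯Q({x_l}, ζ_l)`, the sum over ordered tuples of pairwise disjoint
(possibly empty) sets `(ζ_x)_{x ∈ ω}` with union `ζ`; `Q(∅, ζ) := 1*(ζ)`. -/
def Qfun (β B : ℝ) (φ : α → α → ℝ) (hφ : ∀ x y, φ x y = φ y x) (ω ζ : Finset α) : ℝ :=
  if ω = ∅ then (if ζ = ∅ then 1 else 0)
  else ∑ g ∈ (Fintype.piFinset fun _ : {x // x ∈ ω} => ζ.powerset).filter
        (fun g => (∀ i j, i ≠ j → Disjoint (g i) (g j)) ∧ Finset.univ.sup g = ζ),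
      ∏ x : {x // x ∈ ω}, Qone β B φ hφ (x : α) (g x)


/-! ### Auxiliary lemmas -/

section Aux

lemma starMul_comm (f g : Finset α → ℝ) : starMul f g = starMul g f := by
  funext ω
  unfold starMul
  refine Finset.sum_nbij' (fun η => ω \ η) (fun η => ω \ η) ?_ ?_ ?_ ?_ ?_ <;>
    simp only [Finset.mem_powerset]
  · exact fun a ha => Finset.sdiff_subset
  · exact fun a ha => Finset.sdiff_subset
  · exact fun a ha => Finset.sdiff_sdiff_eq_self ha
  · exact fun a ha => Finset.sdiff_sdiff_eq_self ha
  · intro a ha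
    rw [Finset.sdiff_sdiff_eq_self ha, mul_comm]

lemma starMul_assoc (f g h : Finset α → ℝ) :
    starMul (starMul f g) h = starMul f (starMul g h) := by
  funext ω
  unfold starMul
  simp only [Finset.sum_mul, Finset.mul_sum]
  rw [Finset.sum_sigma', Finset.sum_sigma']
  refine Finset.sum_nbij' (fun p => ⟨p.2, p.1 \ p.2⟩) (fun p => ⟨p.1 ∪ p.2, p.1⟩)
    ?_ ?_ ?_ ?_ ?_
  · rintro ⟨a, b⟩ hab
    simp only [Finset.mem_sigma, Finset.mem_powerset] at hab ⊢
    exact ⟨hab.2.trans hab.1, Finset.sdiff_subset_sdiff hab.1 le_rfl⟩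
  · rintro ⟨a, b⟩ hab
    simp only [Finset.mem_sigma, Finset.mem_powerset] at hab ⊢
    constructor
    · exact Finset.union_subset hab.1 (hab.2.trans Finset.sdiff_subset)
    · exact Finset.subset_union_left
  · rintro ⟨a, b⟩ hab
    simp only [Finset.mem_sigma, Finset.mem_powerset] at hab
    have : b ∪ (a \ b) = a := Finset.union_sdiff_of_subset hab.2
    simp [this]
  · rintro ⟨a, b⟩ hab
    simp only [Finset.mem_sigma, Finset.mem_powerset] at hab
    have hd : Disjoint a b := (Finset.subset_sdiff.mp hab.2).2.symm
    have : (a ∪ b) \ a = b := Finset.union_sdiff_cancel_left hd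
    simp [this]
  · rintro ⟨a, b⟩ hab
    simp only [Finset.mem_sigma, Finset.mem_powerset] at hab
    have h1 : ω \ a = (ω \ b) \ (a \ b) := by
      ext y
      simp only [Finset.mem_sdiff]
      constructor
      · rintro ⟨hy, hya⟩
        exact ⟨⟨hy, fun hyb => hya (hab.2 hyb)⟩, fun h => hya h.1⟩
      · rintro ⟨⟨hy, hyb⟩, hyab⟩
        exact ⟨hy, fun hya => hyab ⟨hya, hyb⟩⟩
    rw [h1]; ring

lemma starMul_neg_left (f g : Finset α → ℝ) (ω : Finset α) :
    starMul (fun η => -f η) g ω = -(starMul f g ω) := by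
  simp [starMul, Finset.sum_neg_distrib]

lemma starUnit_starMul (f : Finset α → ℝ) : starMul starUnit f = f := by
  funext ω
  unfold starMul
  rw [Finset.sum_eq_single (∅ : Finset α)]
  · simp [starUnit]
  · intro b hb hbne
    simp [starUnit, hbne]
  · intro h
    exact absurd (Finset.empty_mem_powerset ω) h

lemma starMul_starUnit (f : Finset α → ℝ) : starMul f starUnit = f := by
  rw [starMul_comm, starUnit_starMul]

lemma starPow_eq_zero {ψ : Finset α → ℝ} (hψ : ψ ∅ = 0) :
    ∀ n (ω : Finset α), ω.card < n → starPow ψ n ω = 0 := by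
  intro n
  induction n with
  | zero => intro ω h; omega
  | succ n ih =>
    intro ω h
    show starMul ψ (starPow ψ n) ω = 0
    unfold starMul
    refine Finset.sum_eq_zero fun η hη => ?_
    rw [Finset.mem_powerset] at hη
    rcases eq_or_ne η ∅ with rfl | hne
    · simp [hψ]
    · have h1 : 1 ≤ η.card := Finset.card_pos.mpr (Finset.nonempty_iff_ne_empty.mpr hne)
      have h2 : (ω \ η).card < n := by
        rw [Finset.card_sdiff_of_subset hη]
        have := Finset.card_le_card hη
        omega
      rw [ih _ h2, mul_zero]

lemma expStar_eq_sum {ψ : Finset α → ℝ} (hψ : ψ ∅ = 0) (ω : Finset α) {N : ℕ}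
    (hN : ω.card ≤ N) :
    expStar ψ ω = ∑ n ∈ Finset.range (N + 1), (n.factorial : ℝ)⁻¹ * starPow ψ n ω := by
  unfold expStar
  refine Finset.sum_subset ?_ ?_
  · exact Finset.range_subset_range.mpr (by omega)
  · intro n hn hn'
    rw [Finset.mem_range] at hn
    rw [Finset.mem_range, not_lt] at hn'
    rw [starPow_eq_zero hψ n ω (by omega), mul_zero]

lemma leibniz (f g : Finset α → ℝ) (x : α) (ζ : Finset α) (hx : x ∉ ζ) :
    starMul f g (insert x ζ) =
      (∑ η ∈ ζ.powerset, f (insert x η) * g (ζ \ η)) +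
      ∑ η ∈ ζ.powerset, f η * g (insert x (ζ \ η)) := by
  unfold starMul
  rw [Finset.powerset_insert, Finset.sum_union, Finset.sum_image]
  · rw [add_comm]
    congr 1
    · refine Finset.sum_congr rfl fun η hη => ?_
      rw [Finset.mem_powerset] at hη
      have : insert x ζ \ insert x η = ζ \ η := by
        ext y
        simp only [Finset.mem_sdiff, Finset.mem_insert, not_or]
        constructor
        · rintro ⟨hy | hy, hyx, hyη⟩
          · exact absurd hy hyx
          · exact ⟨hy, hyη⟩
        · rintro ⟨hy, hyη⟩
          exact ⟨Or.inr hy, fun h => hx (h ▸ hy), hyη⟩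
      rw [this]
    · refine Finset.sum_congr rfl fun η hη => ?_
      rw [Finset.mem_powerset] at hη
      have hxη : x ∉ η := fun h => hx (hη h)
      rw [Finset.insert_sdiff_of_notMem _ hxη]
  · intro a ha b hb hab
    rw [Finset.mem_coe, Finset.mem_powerset] at ha hb
    have hxa : x ∉ a := fun h => hx (ha h)
    have hxb : x ∉ b := fun h => hx (hb h)
    rw [← Finset.erase_insert hxa, ← Finset.erase_insert hxb, hab]
  · rw [Finset.disjoint_right]
    rintro G hG hG'
    rw [Finset.mem_image] at hG
    obtain ⟨a, _, rfl⟩ := hG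
    rw [Finset.mem_powerset] at hG'
    exact hx (hG' (Finset.mem_insert_self x a))

lemma starPow_insert (ψ : Finset α → ℝ) (x : α) (n : ℕ) (ζ : Finset α) (hx : x ∉ ζ) :
    starPow ψ (n + 1) (insert x ζ) =
      (n + 1 : ℝ) * ∑ η ∈ ζ.powerset, ψ (insert x η) * starPow ψ n (ζ \ η) := by
  induction n generalizing ζ with
  | zero =>
    show starMul ψ starUnit (insert x ζ) = _
    rw [leibniz _ _ _ _ hx]
    have h2 : ∑ η ∈ ζ.powerset, ψ η * starUnit (insert x (ζ \ η)) = 0 := by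
      refine Finset.sum_eq_zero fun η hη => ?_
      have : starUnit (insert x (ζ \ η)) = (0 : ℝ) := by
        simp [starUnit, Finset.insert_ne_empty]
      rw [this, mul_zero]
    rw [h2, add_zero, Nat.cast_zero, zero_add, one_mul]
    rfl
  | succ n ih =>
    show starMul ψ (starPow ψ (n + 1)) (insert x ζ) = _
    rw [leibniz _ _ _ _ hx]
    have h2 : ∑ η ∈ ζ.powerset, ψ η * starPow ψ (n + 1) (insert x (ζ \ η)) =
        (n + 1 : ℝ) * ∑ η ∈ ζ.powerset, ψ (insert x η) * starPow ψ (n + 1) (ζ \ η) := by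
      have step1 : ∀ η ∈ ζ.powerset,
          ψ η * starPow ψ (n + 1) (insert x (ζ \ η)) =
          (n + 1 : ℝ) * (ψ η *
            ∑ ρ ∈ (ζ \ η).powerset, ψ (insert x ρ) * starPow ψ n ((ζ \ η) \ ρ)) := by
        intro η hη
        have hxη : x ∉ ζ \ η := fun h => hx (Finset.mem_sdiff.mp h).1
        rw [ih _ hxη]; ring
      rw [Finset.sum_congr rfl step1, ← Finset.mul_sum]
      congr 1
      have key : starMul ψ (starMul (fun ρ => ψ (insert x ρ)) (starPow ψ n)) ζ =
          starMul (fun ρ => ψ (insert x ρ)) (starMul ψ (starPow ψ n)) ζ := by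
        rw [← starMul_assoc, starMul_comm ψ (fun ρ => ψ (insert x ρ)), starMul_assoc]
      exact key
    rw [h2]
    have h3 : (↑(n + 1) + 1 : ℝ) = (n + 1 : ℝ) + 1 := by push_cast; ring
    rw [h3]; ring

lemma expStar_insert {ψ : Finset α → ℝ} (hψ : ψ ∅ = 0) (x : α) (ζ : Finset α) (hx : x ∉ ζ) :
    expStar ψ (insert x ζ) = ∑ η ∈ ζ.powerset, ψ (insert x η) * expStar ψ (ζ \ η) := by
  unfold expStar
  rw [Finset.card_insert_of_notMem hx]
  rw [Finset.sum_range_succ']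
  have h0 : ((0 : ℕ).factorial : ℝ)⁻¹ * starPow ψ 0 (insert x ζ) = 0 := by
    simp [starPow, starUnit, Finset.insert_ne_empty]
  rw [h0, add_zero]
  have hterm : ∀ n ∈ Finset.range (ζ.card + 1),
      ((n + 1).factorial : ℝ)⁻¹ * starPow ψ (n + 1) (insert x ζ) =
      ∑ η ∈ ζ.powerset, ψ (insert x η) * ((n.factorial : ℝ)⁻¹ * starPow ψ n (ζ \ η)) := by
    intro n _
    rw [starPow_insert ψ x n ζ hx, Nat.factorial_succ]
    rw [Finset.mul_sum, Finset.mul_sum]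
    refine Finset.sum_congr rfl fun η _ => ?_
    have hne : ((n + 1 : ℕ) : ℝ) ≠ 0 := by positivity
    have hfac : (n.factorial : ℝ) ≠ 0 := by positivity
    push_cast
    field_simp
  rw [Finset.sum_congr rfl hterm, Finset.sum_comm]
  refine Finset.sum_congr rfl fun η hη => ?_
  rw [Finset.mem_powerset] at hη
  rw [← Finset.mul_sum]
  congr 1
  exact (expStar_eq_sum hψ _ (Finset.card_le_card Finset.sdiff_subset)).symm

lemma expStar_neg_starMul_expStar {ψ : Finset α → ℝ} (hψ : ψ ∅ = 0) :
    starMul (expStar fun η => -ψ η) (expStar ψ) = starUnit := by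
  have hψ' : (fun η : Finset α => -ψ η) ∅ = 0 := by simp [hψ]
  funext ω
  rcases eq_or_ne ω ∅ with rfl | hne
  · have he : ∀ χ : Finset α → ℝ, expStar χ ∅ = 1 := by
      intro χ
      simp [expStar, starPow, starUnit]
    simp [starMul, starUnit, he]
  · obtain ⟨x, ζ, hx, rfl⟩ : ∃ x ζ, x ∉ ζ ∧ insert x ζ = ω := by
      obtain ⟨x, hx⟩ := Finset.nonempty_iff_ne_empty.mpr hne
      exact ⟨x, ω.erase x, Finset.notMem_erase x ω, Finset.insert_erase hx⟩
    rw [leibniz _ _ _ _ hx]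
    have h1 : ∑ η ∈ ζ.powerset, (expStar fun η => -ψ η) (insert x η) * expStar ψ (ζ \ η) =
        starMul (starMul (fun ρ => -ψ (insert x ρ)) (expStar fun η => -ψ η)) (expStar ψ) ζ := by
      unfold starMul
      refine Finset.sum_congr rfl fun η hη => ?_
      rw [Finset.mem_powerset] at hη
      rw [expStar_insert hψ' x η (fun h => hx (hη h))]
    have h2 : ∑ η ∈ ζ.powerset, (expStar fun η => -ψ η) η * expStar ψ (insert x (ζ \ η)) =
        starMul (expStar fun η => -ψ η) (starMul (fun ρ => ψ (insert x ρ)) (expStar ψ)) ζ := by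
      unfold starMul
      refine Finset.sum_congr rfl fun η hη => ?_
      rw [Finset.mem_powerset] at hη
      rw [expStar_insert hψ x (ζ \ η) (fun h => hx (Finset.mem_sdiff.mp h).1)]
    rw [h1, h2]
    have h3 : starMul (starMul (fun ρ => -ψ (insert x ρ)) (expStar fun η => -ψ η)) (expStar ψ) ζ
        = -(starMul (expStar fun η => -ψ η) (starMul (fun ρ => ψ (insert x ρ)) (expStar ψ)) ζ) := by
      have e1 : starMul (fun ρ => -ψ (insert x ρ)) (expStar fun η => -ψ η) =
          fun σ => -(starMul (fun ρ => ψ (insert x ρ)) (expStar fun η => -ψ η) σ) := by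
        funext σ; exact starMul_neg_left _ _ σ
      rw [e1]
      have e2 : starMul (fun σ => -(starMul (fun ρ => ψ (insert x ρ))
          (expStar fun η => -ψ η) σ)) (expStar ψ) ζ =
          -(starMul (starMul (fun ρ => ψ (insert x ρ)) (expStar fun η => -ψ η))
            (expStar ψ) ζ) := starMul_neg_left _ _ ζ
      rw [e2]
      congr 1
      rw [starMul_assoc, starMul_comm (expStar fun η => -ψ η)
        (starMul (fun ρ => ψ (insert x ρ)) (expStar ψ)), starMul_assoc,
        starMul_comm (expStar ψ) (expStar fun η => -ψ η)]
    rw [h3, neg_add_cancel]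
    simp [starUnit, Finset.insert_ne_empty]

/-! #### Graph combinatorics -/

/-- Reachability via edges of a finite edge set. -/
def Reach (G : Finset (Sym2 α)) (a b : α) : Prop :=
  Relation.ReflTransGen (fun u v => s(u, v) ∈ G) a b

lemma Reach.mono' {G F : Finset (Sym2 α)} (h : G ⊆ F) {a b : α} (hr : Reach G a b) :
    Reach F a b :=
  Relation.ReflTransGen.mono (fun _ _ huv => h huv) _ _ hr

lemma mem_graphsOn {G : Finset (Sym2 α)} {ω : Finset α} :
    G ∈ graphsOn ω ↔ G ⊆ ω.sym2 ∧ ∀ e ∈ G, ¬ e.IsDiag := by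
  simp [graphsOn]

lemma graphsOn_eq (ω : Finset α) :
    graphsOn ω = (ω.sym2.filter fun e => ¬ e.IsDiag).powerset := by
  ext G
  rw [mem_graphsOn, Finset.mem_powerset]
  constructor
  · rintro ⟨h1, h2⟩ e he
    exact Finset.mem_filter.mpr ⟨h1 he, h2 e he⟩
  · intro h
    exact ⟨fun e he => (Finset.mem_filter.mp (h he)).1,
      fun e he => (Finset.mem_filter.mp (h he)).2⟩

lemma toGraph_adj {ω : Finset α} {G : Finset (Sym2 α)} (hG : G ∈ graphsOn ω)
    {u v : {x // x ∈ ω}} : (toGraph ω G).Adj u v ↔ s(u.1, v.1) ∈ G := by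
  rw [mem_graphsOn] at hG
  simp only [toGraph, SimpleGraph.fromEdgeSet_adj, Set.mem_setOf_eq, Sym2.map_pair_eq]
  constructor
  · exact fun h => h.1
  · intro h
    refine ⟨h, fun huv => ?_⟩
    exact hG.2 _ h (Sym2.mk_isDiag_iff.mpr (congrArg Subtype.val huv))

lemma reachable_of_reach {ω : Finset α} {G : Finset (Sym2 α)} (hG : G ∈ graphsOn ω)
    {u v : α} (hu : u ∈ ω) (h : Reach G u v) (hv : v ∈ ω) :
    (toGraph ω G).Reachable ⟨u, hu⟩ ⟨v, hv⟩ := by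
  revert hv
  induction h with
  | refl => intro hv; exact SimpleGraph.Reachable.refl _
  | @tail b c hab hbc ih =>
    intro hv
    have hb : b ∈ ω := (Finset.mk_mem_sym2_iff.mp ((mem_graphsOn.mp hG).1 hbc)).1
    exact (ih hb).trans (SimpleGraph.Adj.reachable ((toGraph_adj hG).mpr hbc))

lemma reach_of_reachable {ω : Finset α} {G : Finset (Sym2 α)} (hG : G ∈ graphsOn ω)
    {u v : {x // x ∈ ω}} (h : (toGraph ω G).Reachable u v) : Reach G u.1 v.1 := by
  rw [SimpleGraph.reachable_iff_reflTransGen] at h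
  exact Relation.ReflTransGen.lift Subtype.val (fun a b hab => (toGraph_adj hG).mp hab) _ _ h

lemma toGraph_connected_iff {ω : Finset α} {G : Finset (Sym2 α)} (hG : G ∈ graphsOn ω)
    {x : α} (hx : x ∈ ω) :
    (toGraph ω G).Connected ↔ ∀ y ∈ ω, Reach G x y := by
  constructor
  · intro h y hy
    exact reach_of_reachable hG (h.preconnected ⟨x, hx⟩ ⟨y, hy⟩)
  · intro h
    rw [SimpleGraph.connected_iff]
    refine ⟨fun u v => ?_, ⟨⟨x, hx⟩⟩⟩
    exact (reachable_of_reach hG hx (h u.1 u.2) u.2).symm.trans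
      (reachable_of_reach hG hx (h v.1 v.2) v.2)

lemma sym2_disjoint {s t : Finset α} (h : Disjoint s t) : Disjoint s.sym2 t.sym2 := by
  rw [Finset.disjoint_left]
  intro e hes het
  induction e using Sym2.ind with | _ a b =>
  exact Finset.disjoint_left.mp h (Finset.mk_mem_sym2_iff.mp hes).1
    (Finset.mk_mem_sym2_iff.mp het).1

lemma filter_eq_iff' {ζ η : Finset α} (hη : η ⊆ ζ) (p : α → Prop) [DecidablePred p] :
    ζ.filter p = η ↔ ∀ y ∈ ζ, (p y ↔ y ∈ η) := by
  constructor
  · intro h y hy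
    constructor
    · intro hp; rw [← h]; exact Finset.mem_filter.mpr ⟨hy, hp⟩
    · intro hyη; exact (Finset.mem_filter.mp (h ▸ hyη)).2
  · intro h
    ext y
    simp only [Finset.mem_filter]
    constructor
    · rintro ⟨hy, hp⟩; exact (h y hy).mp hp
    · intro hyη; exact ⟨hη hyη, (h y (hη hyη)).mpr hyη⟩

lemma edge_split {x : α} {ζ η : Finset α} (hx : x ∉ ζ) (hη : η ⊆ ζ)
    {F : Finset (Sym2 α)} (hF : F ⊆ (insert x ζ).sym2)
    (hfib : ∀ y ∈ ζ, (Reach F x y ↔ y ∈ η)) {e : Sym2 α} (he : e ∈ F) :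
    e ∈ (insert x η).sym2 ∨ e ∈ (ζ \ η).sym2 := by
  have main : ∀ u v : α, s(u, v) ∈ F → u ∈ insert x η → v ∈ insert x η := by
    intro u v huv hu
    have hru : Reach F x u := by
      rcases Finset.mem_insert.mp hu with rfl | hu'
      · exact Relation.ReflTransGen.refl
      · exact (hfib u (hη hu')).mpr hu'
    have hrv : Reach F x v := hru.tail huv
    have hv : v ∈ insert x ζ := (Finset.mk_mem_sym2_iff.mp (hF huv)).2
    rcases Finset.mem_insert.mp hv with rfl | hv'
    · exact Finset.mem_insert_self _ _
    · exact Finset.mem_insert_of_mem ((hfib v hv').mp hrv)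
  induction e using Sym2.ind with | _ a b =>
  have hab := Finset.mk_mem_sym2_iff.mp (hF he)
  by_cases ha : a ∈ insert x η
  · exact Or.inl (Finset.mk_mem_sym2_iff.mpr ⟨ha, main a b he ha⟩)
  · by_cases hb : b ∈ insert x η
    · exact absurd (main b a (by rwa [Sym2.eq_swap]) hb) ha
    · refine Or.inr (Finset.mk_mem_sym2_iff.mpr ⟨?_, ?_⟩)
      · rcases Finset.mem_insert.mp hab.1 with rfl | ha'
        · exact absurd (Finset.mem_insert_self _ _) ha
        · exact Finset.mem_sdiff.mpr ⟨ha', fun h => ha (Finset.mem_insert_of_mem h)⟩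
      · rcases Finset.mem_insert.mp hab.2 with rfl | hb'
        · exact absurd (Finset.mem_insert_self _ _) hb
        · exact Finset.mem_sdiff.mpr ⟨hb', fun h => hb (Finset.mem_insert_of_mem h)⟩

open Classical in
lemma reach_filter {x : α} {ζ η : Finset α} (hx : x ∉ ζ) (hη : η ⊆ ζ)
    {F : Finset (Sym2 α)} (hF : F ⊆ (insert x ζ).sym2)
    (hfib : ∀ y ∈ ζ, (Reach F x y ↔ y ∈ η)) {y : α} (hr : Reach F x y) :
    Reach (F.filter (· ∈ (insert x η).sym2)) x y := by
  induction hr with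
  | refl => exact Relation.ReflTransGen.refl
  | @tail b c hxb hbc ih =>
    refine ih.tail ?_
    rw [Finset.mem_filter]
    refine ⟨hbc, ?_⟩
    have hb : b ∈ insert x ζ := (Finset.mk_mem_sym2_iff.mp (hF hbc)).1
    have hbσ : b ∈ insert x η := by
      rcases Finset.mem_insert.mp hb with rfl | hb'
      · exact Finset.mem_insert_self _ _
      · exact Finset.mem_insert_of_mem ((hfib b hb').mp hxb)
    rcases edge_split hx hη hF hfib hbc with h | h
    · exact h
    · exfalso
      have hbd := (Finset.mk_mem_sym2_iff.mp h).1
      rcases Finset.mem_insert.mp hbσ with rfl | hbη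
      · exact hx (Finset.mem_sdiff.mp hbd).1
      · exact (Finset.mem_sdiff.mp hbd).2 hbη

lemma reach_union_subset {x : α} {σx τ : Finset α} (hd : Disjoint σx τ) (hxσ : x ∈ σx)
    {G H : Finset (Sym2 α)} (hG : G ⊆ σx.sym2) (hH : H ⊆ τ.sym2)
    {y : α} (hr : Reach (G ∪ H) x y) : y ∈ σx := by
  induction hr with
  | refl => exact hxσ
  | @tail b c hxb hbc ih =>
    rcases Finset.mem_union.mp hbc with h | h
    · exact (Finset.mk_mem_sym2_iff.mp (hG h)).2
    · exact absurd (Finset.mk_mem_sym2_iff.mp (hH h)).1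
        (fun hbτ => Finset.disjoint_left.mp hd ih hbτ)

open Classical in
lemma ursell_eq_filter (β : ℝ) (φ : α → α → ℝ) (hφ : ∀ x y, φ x y = φ y x)
    {ω : Finset α} {x : α} (hx : x ∈ ω) :
    ursell β φ hφ ω = ∑ G ∈ (graphsOn ω).filter (fun G => ∀ y ∈ ω, Reach G x y),
      ∏ e ∈ G, (Real.exp (-β * Sym2.lift ⟨φ, hφ⟩ e) - 1) := by
  rw [ursell]
  refine Finset.sum_congr ?_ (fun _ _ => rfl)
  refine Finset.filter_congr fun G hG => ?_
  exact toGraph_connected_iff hG hx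

lemma gibbs_eq_sum (β : ℝ) (φ : α → α → ℝ) (hφ : ∀ x y, φ x y = φ y x) (σ : Finset α) :
    gibbs β φ hφ σ = ∑ G ∈ graphsOn σ,
      ∏ e ∈ G, (Real.exp (-β * Sym2.lift ⟨φ, hφ⟩ e) - 1) := by
  rw [graphsOn_eq]
  unfold gibbs energy
  rw [Finset.mul_sum, Real.exp_sum]
  have h1 : ∀ e ∈ σ.sym2.filter (fun e => ¬ e.IsDiag),
      Real.exp (-β * Sym2.lift ⟨φ, hφ⟩ e) =
      (Real.exp (-β * Sym2.lift ⟨φ, hφ⟩ e) - 1) + 1 := fun e _ => by ring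
  rw [Finset.prod_congr rfl h1, Finset.prod_add]
  exact Finset.sum_congr rfl fun t _ => by simp

lemma ursell_empty (β : ℝ) (φ : α → α → ℝ) (hφ : ∀ x y, φ x y = φ y x) :
    ursell β φ hφ ∅ = 0 := by
  rw [ursell, Finset.sum_filter]
  refine Finset.sum_eq_zero fun G hG => if_neg ?_
  intro hc
  obtain ⟨⟨v, hv⟩⟩ := hc.nonempty
  simp at hv

lemma gibbs_empty (β : ℝ) (φ : α → α → ℝ) (hφ : ∀ x y, φ x y = φ y x) :
    gibbs β φ hφ ∅ = 1 := by
  simp [gibbs, energy, Finset.sym2_empty]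

open Classical in
lemma gibbs_insert (β : ℝ) (φ : α → α → ℝ) (hφ : ∀ x y, φ x y = φ y x)
    (x : α) (ζ : Finset α) (hx : x ∉ ζ) :
    gibbs β φ hφ (insert x ζ) =
      ∑ η ∈ ζ.powerset, ursell β φ hφ (insert x η) * gibbs β φ hφ (ζ \ η) := by
  rw [gibbs_eq_sum]
  rw [← Finset.sum_fiberwise_of_maps_to
      (g := fun G => ζ.filter fun y => Reach G x y) (t := ζ.powerset)
      (fun G _ => Finset.mem_powerset.mpr (Finset.filter_subset _ _))]
  refine Finset.sum_congr rfl fun η hηmem => ?_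
  have hη : η ⊆ ζ := Finset.mem_powerset.mp hηmem
  rw [ursell_eq_filter β φ hφ (Finset.mem_insert_self x η), gibbs_eq_sum,
    Finset.sum_mul_sum, ← Finset.sum_product']
  have hxτ : x ∉ ζ \ η := fun h => hx (Finset.mem_sdiff.mp h).1
  have hdστ : Disjoint (insert x η) (ζ \ η) := by
    rw [Finset.disjoint_left]
    intro a ha hat
    rcases Finset.mem_insert.mp ha with rfl | ha'
    · exact hxτ hat
    · exact (Finset.mem_sdiff.mp hat).2 ha'
  have hsub1 : insert x η ⊆ insert x ζ := Finset.insert_subset_insert _ hη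
  have hsub2 : ζ \ η ⊆ insert x ζ :=
    fun a ha => Finset.mem_insert_of_mem (Finset.mem_sdiff.mp ha).1
  refine Finset.sum_nbij'
    (fun F => (F.filter (· ∈ (insert x η).sym2), F.filter (¬ · ∈ (insert x η).sym2)))
    (fun p => p.1 ∪ p.2) ?_ ?_ ?_ ?_ ?_
  · -- forward membership
    intro F hF
    rw [Finset.mem_filter] at hF
    obtain ⟨hFg, hFfib⟩ := hF
    rw [mem_graphsOn] at hFg
    have hfib := (filter_eq_iff' hη _).mp hFfib
    rw [Finset.mem_product]
    constructor
    · rw [Finset.mem_filter]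
      refine ⟨mem_graphsOn.mpr ⟨fun e he => (Finset.mem_filter.mp he).2,
        fun e he => hFg.2 e (Finset.mem_filter.mp he).1⟩, ?_⟩
      intro y hy
      rcases Finset.mem_insert.mp hy with rfl | hy'
      · exact Relation.ReflTransGen.refl
      · exact reach_filter hx hη hFg.1 hfib ((hfib y (hη hy')).mpr hy')
    · refine mem_graphsOn.mpr ⟨fun e he => ?_,
        fun e he => hFg.2 e (Finset.mem_filter.mp he).1⟩
      obtain ⟨heF, heσ⟩ := Finset.mem_filter.mp he
      rcases edge_split hx hη hFg.1 hfib heF with h | h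
      · exact absurd h heσ
      · exact h
  · -- backward membership
    rintro ⟨G, H⟩ hp
    rw [Finset.mem_product] at hp
    obtain ⟨hGA, hHB⟩ := hp
    rw [Finset.mem_filter] at hGA
    obtain ⟨hGg, hGconn⟩ := hGA
    rw [mem_graphsOn] at hGg
    rw [mem_graphsOn] at hHB
    rw [Finset.mem_filter]
    constructor
    · refine mem_graphsOn.mpr ⟨Finset.union_subset
        (hGg.1.trans (Finset.sym2_mono hsub1)) (hHB.1.trans (Finset.sym2_mono hsub2)), ?_⟩
      intro e he
      rcases Finset.mem_union.mp he with h | h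
      · exact hGg.2 e h
      · exact hHB.2 e h
    · refine (filter_eq_iff' hη _).mpr fun y hy => ?_
      constructor
      · intro hr
        have hyσ : y ∈ insert x η :=
          reach_union_subset hdστ (Finset.mem_insert_self x η) hGg.1 hHB.1 hr
        rcases Finset.mem_insert.mp hyσ with rfl | hy'
        · exact absurd hy hx
        · exact hy'
      · intro hyη
        exact (hGconn y (Finset.mem_insert_of_mem hyη)).mono' Finset.subset_union_left
  · -- left inverse
    intro F _
    exact Finset.filter_union_filter_not_eq _ F
  · -- right inverse
    rintro ⟨G, H⟩ hp
    rw [Finset.mem_product] at hp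
    obtain ⟨hGA, hHB⟩ := hp
    rw [Finset.mem_filter] at hGA
    have hGsub : G ⊆ (insert x η).sym2 := (mem_graphsOn.mp hGA.1).1
    have hHsub : H ⊆ (ζ \ η).sym2 := (mem_graphsOn.mp hHB).1
    have hHout : ∀ e ∈ H, e ∉ (insert x η).sym2 := fun e he hmem =>
      Finset.disjoint_left.mp (sym2_disjoint hdστ) hmem (hHsub he)
    have e1 : (G ∪ H).filter (· ∈ (insert x η).sym2) = G := by
      ext e
      simp only [Finset.mem_filter, Finset.mem_union]
      constructor
      · rintro ⟨hGH | hH, hmem⟩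
        · exact hGH
        · exact absurd hmem (hHout e hH)
      · intro hG
        exact ⟨Or.inl hG, hGsub hG⟩
    have e2 : (G ∪ H).filter (¬ · ∈ (insert x η).sym2) = H := by
      ext e
      simp only [Finset.mem_filter, Finset.mem_union]
      constructor
      · rintro ⟨hGH | hH, hmem⟩
        · exact absurd (hGsub hGH) hmem
        · exact hH
      · intro hH
        exact ⟨Or.inr hH, hHout e hH⟩
    simp only [e1, e2]
  · -- values
    intro F _
    exact (Finset.prod_filter_mul_prod_filter_not F (· ∈ (insert x η).sym2) _).symm

lemma expStar_ursell (β : ℝ) (φ : α → α → ℝ) (hφ : ∀ x y, φ x y = φ y x) :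
    expStar (ursell β φ hφ) = gibbs β φ hφ := by
  funext σ
  induction σ using Finset.strongInduction with
  | _ σ ih =>
    rcases eq_or_ne σ ∅ with rfl | hne
    · rw [gibbs_empty]
      simp [expStar, starPow, starUnit]
    · obtain ⟨x, hxσ⟩ := Finset.nonempty_iff_ne_empty.mpr hne
      obtain ⟨ζ, hxζ, rfl⟩ : ∃ ζ, x ∉ ζ ∧ insert x ζ = σ :=
        ⟨σ.erase x, Finset.notMem_erase x σ, Finset.insert_erase hxσ⟩
      rw [expStar_insert (ursell_empty β φ hφ) x ζ hxζ, gibbs_insert β φ hφ x ζ hxζ]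
      refine Finset.sum_congr rfl fun η hη => ?_
      rw [Finset.mem_powerset] at hη
      rw [ih (ζ \ η) (Finset.ssubset_of_subset_of_ssubset Finset.sdiff_subset
        (Finset.ssubset_insert hxζ))]

end Aux

/-- For every nonempty finite `ω ⊆ α` and every `x ∈ ω`, one has `k̄({x}, ω \ {x}) = k(ω)`,
where `k̄(ω, ζ) := (exp*(−k) * D_ω(e^{−βE}))(ζ)` and `k` is the Ursell function. -/
theorem kbar_singleton_eq_ursell (β : ℝ) (hβ : 0 < β) (φ : α → α → ℝ)
    (hφ : ∀ x y, φ x y = φ y x) (ω : Finset α) (hω : ω ≠ ∅) (x : α) (hx : x ∈ ω) :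
    kbar β φ hφ {x} (ω.erase x) = ursell β φ hφ ω := by
  classical
  have hxζ : x ∉ ω.erase x := Finset.notMem_erase x ω
  have step1 : kbar β φ hφ {x} (ω.erase x) =
      starMul (expStar fun η => - ursell β φ hφ η)
        (starMul (fun ρ => ursell β φ hφ (insert x ρ)) (gibbs β φ hφ)) (ω.erase x) := by
    rw [kbar]
    unfold starMul
    refine Finset.sum_congr rfl fun η hη => ?_
    rw [Finset.mem_powerset] at hη
    congr 1
    have hxd : x ∉ ω.erase x \ η := fun h => hxζ (Finset.mem_sdiff.mp h).1
    have hd : Disjoint (ω.erase x \ η) {x} := Finset.disjoint_singleton_right.mpr hxd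
    show Dop {x} (gibbs β φ hφ) (ω.erase x \ η) = _
    rw [Dop, if_pos hd]
    have hu : (ω.erase x \ η) ∪ {x} = insert x (ω.erase x \ η) := by
      rw [Finset.union_comm]; exact Finset.insert_eq x _ |>.symm
    rw [hu, gibbs_insert β φ hφ x (ω.erase x \ η) hxd]
  rw [step1, ← expStar_ursell β φ hφ]
  have h2 : starMul (expStar fun η => - ursell β φ hφ η)
      (starMul (fun ρ => ursell β φ hφ (insert x ρ)) (expStar (ursell β φ hφ))) =
      starMul (fun ρ => ursell β φ hφ (insert x ρ))
        (starMul (expStar fun η => - ursell β φ hφ η) (expStar (ursell β φ hφ))) := by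
    rw [← starMul_assoc,
      starMul_comm (expStar fun η => - ursell β φ hφ η) (fun ρ => ursell β φ hφ (insert x ρ)),
      starMul_assoc]
  rw [h2, expStar_neg_starMul_expStar (ursell_empty β φ hφ), starMul_starUnit]
  show ursell β φ hφ (insert x (ω.erase x)) = ursell β φ hφ ω
  rw [Finset.insert_erase hx]

end
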